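/- arXiv:math/0212052 — 5 statements merged into one kernel-verified Lean document; each statement's English description precedes it below -/
import Mathlib

section
/- Let M be a smooth manifold, n ≥ 1, and let {·,·} be an affine Jacobi bracket on the trivial bundle M×ℝⁿ. Then for every basic function F ∈ C^∞(M×ℝⁿ,ℝ) and every affine function a ∈ C^∞(M×ℝⁿ,ℝ), the function {F,a} − F·{1,a} is basic. -/
open scoped Manifold

/-- A Jacobi bracket on the smooth functions (those satisfying the predicate `S`)
of a space `N`: an ℝ-bilinear antisymmetric bracket satisfying the Jacobi identity
and the generalized Leibniz rule. -/
structure JacobiBracket (N : Type*) (S : (N → ℝ) → Prop) where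
  br : (N → ℝ) → (N → ℝ) → N → ℝ
  smooth_br : ∀ f g, S f → S g → S (br f g)
  add_left : ∀ f g h, S f → S g → S h → br (f + g) h = br f h + br g h
  smul_left : ∀ (c : ℝ) (f g : N → ℝ), S f → S g → br (c • f) g = c • br f g
  antisymm : ∀ f g, S f → S g → br f g = -br g f
  jacobi : ∀ f g h, S f → S g → S h →
    br f (br g h) + br g (br h f) + br h (br f g) = 0
  leibniz : ∀ f g h, S f → S g → S h →
    br f (g * h) = br f g * h + g * br f h - g * h * br f 1

/-- A function on the trivial bundle `M × ℝⁿ` is fibrewise affine if on each fibre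
it is an affine map `ℝⁿ → ℝ`. -/
def IsFibAffine {M : Type*} {n : ℕ} (F : M × (Fin n → ℝ) → ℝ) : Prop :=
  ∀ x : M, ∃ (μ : (Fin n → ℝ) →ₗ[ℝ] ℝ) (c : ℝ), ∀ v, F (x, v) = μ v + c

section

variable {EM : Type*} [NormedAddCommGroup EM] [NormedSpace ℝ EM] [FiniteDimensional ℝ EM]
  {HM : Type*} [TopologicalSpace HM] (IM : ModelWithCorners ℝ EM HM)
  (M : Type*) [TopologicalSpace M] [ChartedSpace HM M] [IsManifold IM (⊤ : ℕ∞) M]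
  (n : ℕ)

/-- Smooth real functions on the total space of the trivial bundle `M × ℝⁿ`. -/
def SmoothBdl : (M × (Fin n → ℝ) → ℝ) → Prop :=
  fun F => ContMDiff (IM.prod (𝓘(ℝ, Fin n → ℝ))) 𝓘(ℝ, ℝ) (⊤ : ℕ∞) F

/-- Basic functions on the trivial bundle `M × ℝⁿ`: pullbacks of smooth functions
on `M` by the projection. -/
def IsBasic : (M × (Fin n → ℝ) → ℝ) → Prop :=
  fun F => ∃ f : M → ℝ, ContMDiff IM 𝓘(ℝ, ℝ) (⊤ : ℕ∞) f ∧ F = fun p => f p.1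

end

/-! Write `G = {F,a} - F⬝{1,a}`. It is fibrewise affine, being built from brackets of affine
functions with a coefficient `F` constant on fibres. By the Leibniz rule and antisymmetry,
`uⱼ⬝G = {a,uⱼ}⬝F - {a,uⱼ⬝F}` for each fibre coordinate `uⱼ`, so every `uⱼ⬝G` is fibrewise affine
too. An affine function `φ` on `ℝⁿ` such that all `vⱼ⬝φ(v)` are affine is constant: along the
`j`-th axis `t ↦ t⬝φ(t eⱼ)` is affine only if the slope of `φ` in direction `eⱼ` vanishes. Hence `G`
is constant on fibres, i.e. basic. -/

theorem LinearMap.eq_zero_of_forall_coord_mul_affine {ι : Type*} [Fintype ι] [DecidableEq ι]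
    (μ : (ι → ℝ) →ₗ[ℝ] ℝ) (c : ℝ)
    (h : ∀ j, ∃ (ν : (ι → ℝ) →ₗ[ℝ] ℝ) (d : ℝ), ∀ v, v j * (μ v + c) = ν v + d) :
    μ = 0 := by
  ext j
  obtain ⟨ν, d, hν⟩ := h j
  have h0 := hν 0
  have h1 := hν (Pi.single j 1)
  have h2 := hν ((2 : ℝ) • Pi.single j 1)
  simp only [Pi.zero_apply, Pi.smul_apply, Pi.single_eq_same, smul_eq_mul, map_zero, map_smul,
    zero_mul, mul_one, zero_add] at h0 h1 h2
  simp only [LinearMap.coe_comp, LinearMap.coe_single, Function.comp_apply,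
    LinearMap.zero_apply]
  linarith

theorem JacobiBracket.mul_br_sub_mul_br_one {N : Type*} {S : (N → ℝ) → Prop}
    (J : JacobiBracket N S) {F a g : N → ℝ} (hF : S F) (ha : S a) (hg : S g) (h1 : S 1) :
    g * (J.br F a - F * J.br 1 a) = J.br a g * F - J.br a (g * F) := by
  rw [J.leibniz a g F ha hg hF, J.antisymm a F ha hF, J.antisymm a 1 ha h1]
  ring

section FibAffine

variable {M : Type*} {n : ℕ}

theorem isFibAffine_comp_fst (f : M → ℝ) : IsFibAffine (fun p : M × (Fin n → ℝ) => f p.1) :=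
  fun x => ⟨0, f x, fun _ => by simp⟩

theorem isFibAffine_coord (j : Fin n) : IsFibAffine (fun p : M × (Fin n → ℝ) => p.2 j) :=
  fun _ => ⟨LinearMap.proj j, 0, fun _ => by simp⟩

namespace IsFibAffine

theorem sub {A B : M × (Fin n → ℝ) → ℝ} (hA : IsFibAffine A) (hB : IsFibAffine B) :
    IsFibAffine (A - B) := fun x => by
  obtain ⟨μ, c, hμ⟩ := hA x
  obtain ⟨ν, d, hν⟩ := hB x
  exact ⟨μ - ν, c - d, fun v => by simp only [Pi.sub_apply, hμ, hν, LinearMap.sub_apply]; ring⟩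

theorem comp_fst_mul (f : M → ℝ) {A : M × (Fin n → ℝ) → ℝ} (hA : IsFibAffine A) :
    IsFibAffine (fun p => f p.1 * A p) := fun x => by
  obtain ⟨μ, c, hμ⟩ := hA x
  exact ⟨f x • μ, f x * c, fun v => by simp only [hμ, LinearMap.smul_apply, smul_eq_mul]; ring⟩

theorem mul_comp_fst (f : M → ℝ) {A : M × (Fin n → ℝ) → ℝ} (hA : IsFibAffine A) :
    IsFibAffine (A * fun p => f p.1) := by
  convert comp_fst_mul f hA using 2 with p
  exact mul_comm _ _

theorem fiber_const_of_coord_mul {G : M × (Fin n → ℝ) → ℝ} (hG : IsFibAffine G)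
    (hmul : ∀ j : Fin n, IsFibAffine (fun p : M × (Fin n → ℝ) => p.2 j * G p))
    (x : M) (v : Fin n → ℝ) : G (x, v) = G (x, 0) := by
  obtain ⟨μ, c, hμ⟩ := hG x
  have hμ0 : μ = 0 := μ.eq_zero_of_forall_coord_mul_affine c fun j => by
    simpa only [hμ] using hmul j x
  rw [hμ, hμ, hμ0]
  simp

end IsFibAffine

end FibAffine

section Smooth

variable {EM : Type*} [NormedAddCommGroup EM] [NormedSpace ℝ EM]
  {HM : Type*} [TopologicalSpace HM] {IM : ModelWithCorners ℝ EM HM}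
  {M : Type*} [TopologicalSpace M] [ChartedSpace HM M] {n : ℕ}

theorem SmoothBdl.one : SmoothBdl IM M n 1 := contMDiff_const

theorem SmoothBdl.coord (j : Fin n) : SmoothBdl IM M n (fun p => p.2 j) :=
  (ContinuousLinearMap.proj j : (Fin n → ℝ) →L[ℝ] ℝ).contMDiff.comp contMDiff_snd

theorem IsBasic.of_fiber_const {G : M × (Fin n → ℝ) → ℝ} (hG : SmoothBdl IM M n G)
    (hconst : ∀ x v, G (x, v) = G (x, 0)) : IsBasic IM M n G :=
  ⟨fun x => G (x, 0), hG.comp (contMDiff_id.prodMk contMDiff_const),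
    funext fun p => hconst p.1 p.2⟩

end Smooth

theorem stmt0_general
    {EM : Type*} [NormedAddCommGroup EM] [NormedSpace ℝ EM]
    {HM : Type*} [TopologicalSpace HM] (IM : ModelWithCorners ℝ EM HM)
    (M : Type*) [TopologicalSpace M] [ChartedSpace HM M]
    (n : ℕ)
    (J : JacobiBracket (M × (Fin n → ℝ)) (SmoothBdl IM M n))
    (haff : ∀ a b, SmoothBdl IM M n a → SmoothBdl IM M n b →
      IsFibAffine a → IsFibAffine b → IsFibAffine (J.br a b))
    (F a : M × (Fin n → ℝ) → ℝ)
    (hF : SmoothBdl IM M n F) (hFbasic : IsBasic IM M n F)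
    (ha : SmoothBdl IM M n a) (haaff : IsFibAffine a) :
    IsBasic IM M n (fun p => J.br F a p - F p * J.br 1 a p) := by
  obtain ⟨f, -, rfl⟩ := hFbasic
  have hG : SmoothBdl IM M n (J.br (fun p => f p.1) a - (fun p => f p.1) * J.br 1 a) :=
    (J.smooth_br _ a hF ha).sub (hF.mul (J.smooth_br 1 a SmoothBdl.one ha))
  have hGaff : IsFibAffine (fun p => J.br (fun p => f p.1) a p - f p.1 * J.br 1 a p) :=
    (haff _ a hF ha (isFibAffine_comp_fst f) haaff).sub
      ((haff 1 a SmoothBdl.one ha (isFibAffine_comp_fst 1) haaff).comp_fst_mul f)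
  have hcoord_mul (j : Fin n) :
      IsFibAffine (fun p => p.2 j * (J.br (fun p => f p.1) a p - f p.1 * J.br 1 a p)) := by
    have hu := SmoothBdl.coord (IM := IM) (M := M) j
    refine (congrArg IsFibAffine (J.mul_br_sub_mul_br_one hF ha hu SmoothBdl.one)).mpr ?_
    exact ((haff a _ ha hu haaff (isFibAffine_coord j)).mul_comp_fst f).sub
      (haff a _ ha (hu.mul hF) haaff ((isFibAffine_coord j).mul_comp_fst f))
  exact IsBasic.of_fiber_const hG (hGaff.fiber_const_of_coord_mul hcoord_mul)

/-- for an affine Jacobi bracket on the trivial bundle `M × ℝⁿ`, `n ≥ 1`,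
and any basic `F` and affine `a`, the function `{F,a} - F⬝{1,a}` is basic. -/
theorem stmt0
    {EM : Type*} [NormedAddCommGroup EM] [NormedSpace ℝ EM] [FiniteDimensional ℝ EM]
    {HM : Type*} [TopologicalSpace HM] (IM : ModelWithCorners ℝ EM HM)
    (M : Type*) [TopologicalSpace M] [ChartedSpace HM M] [IsManifold IM (⊤ : ℕ∞) M]
    (n : ℕ) (hn : 1 ≤ n)
    (J : JacobiBracket (M × (Fin n → ℝ)) (SmoothBdl IM M n))
    (haff : ∀ a b, SmoothBdl IM M n a → SmoothBdl IM M n b →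
      IsFibAffine a → IsFibAffine b → IsFibAffine (J.br a b))
    (F a : M × (Fin n → ℝ) → ℝ)
    (hF : SmoothBdl IM M n F) (hFbasic : IsBasic IM M n F)
    (ha : SmoothBdl IM M n a) (haaff : IsFibAffine a) :
    IsBasic IM M n (fun p => J.br F a p - F p * J.br 1 a p) :=
  stmt0_general IM M n J haff F a hF hFbasic ha haaff
end

section
/- Let V be a finite-dimensional real vector space and let {·,·} be a Jacobi bracket on C^∞(V,ℝ). Then the following are equivalent: (a) {·,·} is homogeneous, i.e. Δ{f,g} = {Δf, g} + {f, Δg} − {f,g} for all f,g ∈ C^∞(V,ℝ), where (Δf)(x) := Df(x)(x) is the Liouville (Euler) operator; (b) the bracket of any two linear functions (restrictions of elements of V*) is a linear function, the bracket of any two affine functions is an affine function, and {1,ℓ} is a constant function for every linear function ℓ. -/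
/-- Smooth (C^∞) real functions on a normed space `V`. -/
def Cinf (V : Type*) [NormedAddCommGroup V] [NormedSpace ℝ V] : (V → ℝ) → Prop :=
  fun f => ContDiff ℝ (⊤ : ℕ∞) f

/-- Affine real functions on a real vector space: `x ↦ μ(x) + c` with `μ` linear. -/
def IsAffineFn {V : Type*} [AddCommGroup V] [Module ℝ V] (f : V → ℝ) : Prop :=
  ∃ (μ : V →ₗ[ℝ] ℝ) (c : ℝ), ∀ x, f x = μ x + c

/-- A Jacobi bracket on `C^∞(V,ℝ)` is affine if the bracket of two affine functions
is affine. -/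
def IsAffineJacobi {V : Type*} [NormedAddCommGroup V] [NormedSpace ℝ V]
    (J : JacobiBracket V (Cinf V)) : Prop :=
  ∀ a b, Cinf V a → Cinf V b → IsAffineFn a → IsAffineFn b → IsAffineFn (J.br a b)

/-- The Liouville (Euler) operator: `(Δf)(x) = Df(x)(x)`. -/
noncomputable def eulerOp {V : Type*} [NormedAddCommGroup V] [NormedSpace ℝ V] (f : V → ℝ) : V → ℝ :=
  fun x => fderiv ℝ f x x

section Basic
variable {V : Type*} [NormedAddCommGroup V] [NormedSpace ℝ V]

lemma cinf_one : Cinf V 1 := contDiff_const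
lemma cinf_add {f g : V → ℝ} (hf : Cinf V f) (hg : Cinf V g) : Cinf V (f + g) := ContDiff.add hf hg
lemma cinf_mul {f g : V → ℝ} (hf : Cinf V f) (hg : Cinf V g) : Cinf V (f * g) := ContDiff.mul hf hg
lemma cinf_smul (c : ℝ) {f : V → ℝ} (hf : Cinf V f) : Cinf V (c • f) := contDiff_const.smul hf

lemma cinf_linear [FiniteDimensional ℝ V] (μ : V →ₗ[ℝ] ℝ) : Cinf V ⇑μ :=
  (LinearMap.toContinuousLinearMap μ).contDiff

lemma eulerOp_linear [FiniteDimensional ℝ V] (μ : V →ₗ[ℝ] ℝ) : eulerOp ⇑μ = ⇑μ := by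
  funext x
  have h2 : fderiv ℝ ⇑μ x = LinearMap.toContinuousLinearMap μ :=
    (LinearMap.toContinuousLinearMap μ).fderiv
  show (fderiv ℝ ⇑μ x) x = μ x
  rw [h2]
  rfl

lemma eulerOp_const (c : ℝ) : eulerOp (fun _ : V => c) = 0 := by
  funext x
  show (fderiv ℝ (fun _ : V => c) x) x = 0
  rw [fderiv_fun_const]
  rfl

lemma eulerOp_one : eulerOp (1 : V → ℝ) = 0 := eulerOp_const 1

lemma cinf_eulerOp {f : V → ℝ} (hf : Cinf V f) : Cinf V (eulerOp f) := by
  have h1 : ContDiff ℝ (⊤ : ℕ∞) (fderiv ℝ f) := hf.fderiv_right (by simp)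
  exact h1.clm_apply contDiff_id
end Basic

section Euler
variable {V : Type*} [NormedAddCommGroup V] [NormedSpace ℝ V]

/-- along-ray function -/
private lemma ray_hasDerivAt {f : V → ℝ} (hf : Cinf V f) (x : V) (t : ℝ) :
    HasDerivAt (fun s : ℝ => f (s • x)) (fderiv ℝ f (t • x) x) t := by
  have hc : HasDerivAt (fun s : ℝ => s • x) x t := by
    simpa using (hasDerivAt_id t).smul_const x
  have hfd : HasFDerivAt f (fderiv ℝ f (t • x)) (t • x) :=
    (hf.differentiable (by simp) (t • x)).hasFDerivAt
  exact hfd.comp_hasDerivAt t hc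

private lemma ray_contDiff {f : V → ℝ} (hf : Cinf V f) (x : V) :
    ContDiff ℝ (⊤ : ℕ∞) (fun s : ℝ => f (s • x)) :=
  hf.comp ((contDiff_id.smul contDiff_const))

/-- If `Δf = f` then `f` is (continuous) linear. -/
lemma linear_of_euler_eq_self {f : V → ℝ} (hf : Cinf V f) (h : eulerOp f = f) :
    ∀ x, f x = fderiv ℝ f 0 x := by
  intro x
  set u : ℝ → ℝ := fun s => f (s • x) with hu
  have hu' : ∀ t, deriv u t = fderiv ℝ f (t • x) x := fun t => (ray_hasDerivAt hf x t).deriv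
  have husmooth : ContDiff ℝ ((⊤:ℕ∞)) u := (ray_contDiff hf x).of_le (by simp)
  have hkey : ∀ t : ℝ, t * deriv u t = u t := by
    intro t
    rw [hu']
    have h0 := congrFun h (t • x)
    simp only [eulerOp] at h0
    have : u t = (fderiv ℝ f (t • x)) (t • x) := h0.symm
    rw [this, map_smul, smul_eq_mul]
  -- differentiate hkey
  have hdu : Differentiable ℝ (deriv u) := (contDiff_infty_iff_deriv.1 husmooth).2.differentiable (by simp)
  have h2 : ∀ t : ℝ, t ≠ 0 → deriv (deriv u) t = 0 := by
    intro t ht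
    have hL : HasDerivAt (fun s : ℝ => s * deriv u s)
        (deriv u t + t * deriv (deriv u) t) t := by
      have := (hasDerivAt_id' t).mul (hdu t).hasDerivAt; simp only [one_mul] at this; exact this
    have hR : HasDerivAt u (deriv u t) t := (husmooth.differentiable (by simp) t).hasDerivAt
    have : HasDerivAt (fun s : ℝ => s * deriv u s) (deriv u t) t := by
      apply hR.congr_of_eventuallyEq
      filter_upwards with s using (hkey s)
    have := hL.unique this
    have ht2 : t * deriv (deriv u) t = 0 := by linarith
    exact (mul_eq_zero.1 ht2).resolve_left ht
  have h2' : ∀ t : ℝ, deriv (deriv u) t = 0 := by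
    have hcont : Continuous (deriv (deriv u)) := by
      have := (contDiff_infty_iff_deriv.1 (contDiff_infty_iff_deriv.1 husmooth).2).2
      exact this.continuous
    have : deriv (deriv u) = fun _ => 0 := by
      apply Continuous.ext_on (dense_compl_singleton (0:ℝ)) hcont continuous_const
      intro t ht; exact h2 t ht
    exact fun t => congrFun this t
  have hconst : ∀ t, deriv u t = deriv u 0 := fun t => is_const_of_deriv_eq_zero hdu h2' t 0
  have hu0 : u 0 = 0 := by have := hkey 0; simpa using this.symm
  have hlin : ∀ t, u t = t * deriv u 0 := by
    intro t
    have hd : ∀ s, deriv (fun r => u r - r * deriv u 0) s = 0 := by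
      intro s
      rw [deriv_fun_sub (husmooth.differentiable (by simp) s) (by fun_prop)]
      rw [hconst s]
      simp
    have hdiff : Differentiable ℝ (fun r => u r - r * deriv u 0) :=
      (husmooth.differentiable (by simp)).sub (by fun_prop)
    have := is_const_of_deriv_eq_zero hdiff hd t 0
    simp only [hu0] at this
    linarith [this]
  have : f x = u 1 := by simp [hu]
  rw [this, hlin 1, one_mul, hu', zero_smul]

/-- If `Δf = 0` then `f` is constant. -/
lemma const_of_euler_eq_zero {f : V → ℝ} (hf : Cinf V f) (h : eulerOp f = 0) :
    ∀ x, f x = f 0 := by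
  intro x
  set u : ℝ → ℝ := fun s => f (s • x) with hu
  have hu' : ∀ t, deriv u t = fderiv ℝ f (t • x) x := fun t => (ray_hasDerivAt hf x t).deriv
  have husmooth : ContDiff ℝ ((⊤:ℕ∞)) u := (ray_contDiff hf x).of_le (by simp)
  have hkey : ∀ t : ℝ, t * deriv u t = 0 := by
    intro t
    rw [hu']
    have h0 := congrFun h (t • x)
    simp only [eulerOp, Pi.zero_apply] at h0
    calc t * (fderiv ℝ f (t • x)) x = (fderiv ℝ f (t • x)) (t • x) := by rw [map_smul, smul_eq_mul]
    _ = 0 := h0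
  have h2' : ∀ t : ℝ, deriv u t = 0 := by
    have hcont : Continuous (deriv u) := (contDiff_infty_iff_deriv.1 husmooth).2.continuous
    have : deriv u = fun _ => 0 := by
      apply Continuous.ext_on (dense_compl_singleton (0:ℝ)) hcont continuous_const
      intro t ht
      exact (mul_eq_zero.1 (hkey t)).resolve_left ht
    exact fun t => congrFun this t
  have := is_const_of_deriv_eq_zero (husmooth.differentiable (by simp)) h2' 1 0
  simpa [hu] using this
end Euler

section BracketAlg
variable {V : Type*} [NormedAddCommGroup V] [NormedSpace ℝ V] (J : JacobiBracket V (Cinf V))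

lemma br_add_right {f g h : V → ℝ} (hf : Cinf V f) (hg : Cinf V g) (hh : Cinf V h) :
    J.br f (g + h) = J.br f g + J.br f h := by
  rw [J.antisymm f (g+h) hf (cinf_add hg hh), J.add_left g h f hg hh hf,
    J.antisymm g f hg hf, J.antisymm h f hh hf]
  funext x; simp; ring

lemma br_smul_right (c : ℝ) {f g : V → ℝ} (hf : Cinf V f) (hg : Cinf V g) :
    J.br f (c • g) = c • J.br f g := by
  rw [J.antisymm f (c • g) hf (cinf_smul c hg), J.smul_left c g f hg hf,
    J.antisymm g f hg hf]
  funext x; simp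

lemma br_zero_left {g : V → ℝ} (hg : Cinf V g) : J.br 0 g = 0 := by
  have h0 : (0 : V → ℝ) = (0:ℝ) • (1 : V → ℝ) := by funext x; simp
  rw [h0, J.smul_left 0 1 g cinf_one hg]
  funext x; simp

lemma br_zero_right {f : V → ℝ} (hf : Cinf V f) : J.br f 0 = 0 := by
  rw [J.antisymm f 0 hf contDiff_const, br_zero_left J hf]
  funext x; simp

lemma br_one_one : J.br 1 1 = 0 := by
  have h := J.antisymm 1 1 cinf_one cinf_one
  funext x
  have := congrFun h x
  simp only [Pi.neg_apply] at this
  have : J.br 1 1 x = 0 := by linarith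
  simpa using this

end BracketAlg

section Forward
variable {V : Type*} [NormedAddCommGroup V] [NormedSpace ℝ V] [FiniteDimensional ℝ V]
  (J : JacobiBracket V (Cinf V))

theorem forward_dir
    (H : ∀ f g, Cinf V f → Cinf V g →
      eulerOp (J.br f g) = J.br (eulerOp f) g + J.br f (eulerOp g) - J.br f g) :
    ((∀ μ ν : V →ₗ[ℝ] ℝ, ∃ κ : V →ₗ[ℝ] ℝ, J.br ⇑μ ⇑ν = ⇑κ) ∧
     (∀ a b, Cinf V a → Cinf V b → IsAffineFn a → IsAffineFn b → IsAffineFn (J.br a b)) ∧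
     (∀ μ : V →ₗ[ℝ] ℝ, ∃ c : ℝ, J.br 1 ⇑μ = fun _ => c)) := by
  have part1 : ∀ μ ν : V →ₗ[ℝ] ℝ, ∃ κ : V →ₗ[ℝ] ℝ, J.br ⇑μ ⇑ν = ⇑κ := by
    intro μ ν
    have hμ := cinf_linear μ
    have hν := cinf_linear ν
    have h := H ⇑μ ⇑ν hμ hν
    rw [eulerOp_linear μ, eulerOp_linear ν] at h
    have h' : eulerOp (J.br ⇑μ ⇑ν) = J.br ⇑μ ⇑ν := by
      rw [h]; funext x; simp
    have hK : Cinf V (J.br ⇑μ ⇑ν) := J.smooth_br _ _ hμ hν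
    refine ⟨(fderiv ℝ (J.br ⇑μ ⇑ν) 0).toLinearMap, funext fun x => ?_⟩
    exact linear_of_euler_eq_self hK h' x
  have part3 : ∀ μ : V →ₗ[ℝ] ℝ, ∃ c : ℝ, J.br 1 ⇑μ = fun _ => c := by
    intro μ
    have hμ := cinf_linear μ
    have h := H 1 ⇑μ cinf_one hμ
    rw [eulerOp_one, eulerOp_linear μ, br_zero_left J hμ] at h
    have h' : eulerOp (J.br 1 ⇑μ) = 0 := by rw [h]; funext x; simp
    have hK : Cinf V (J.br 1 ⇑μ) := J.smooth_br _ _ cinf_one hμ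
    exact ⟨J.br 1 ⇑μ 0, funext fun x => const_of_euler_eq_zero hK h' x⟩
  refine ⟨part1, ?_, part3⟩
  intro a b ha hb haff hbff
  obtain ⟨μ, c, hac⟩ := haff
  obtain ⟨ν, d, hbd⟩ := hbff
  have hμ := cinf_linear μ
  have hν := cinf_linear ν
  have ha' : a = ⇑μ + c • (1 : V → ℝ) := by funext x; simp [hac x]
  have hb' : b = ⇑ν + d • (1 : V → ℝ) := by funext x; simp [hbd x]
  obtain ⟨κ, hκ⟩ := part1 μ ν
  obtain ⟨cν, hcν⟩ := part3 ν
  obtain ⟨cμ, hcμ⟩ := part3 μ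
  have hbr1μ : J.br ⇑μ 1 = fun _ => -cμ := by
    rw [J.antisymm ⇑μ 1 hμ cinf_one, hcμ]; funext x; simp
  refine ⟨κ, d * (-cμ) + c * cν, fun x => ?_⟩
  have e1 : J.br a b = J.br ⇑μ b + c • J.br 1 b := by
    rw [ha', J.add_left ⇑μ (c • 1) b hμ (cinf_smul c cinf_one) hb,
      J.smul_left c 1 b cinf_one hb]
  have e2 : J.br ⇑μ b = J.br ⇑μ ⇑ν + d • J.br ⇑μ 1 := by
    rw [hb', br_add_right J hμ hν (cinf_smul d cinf_one),
      br_smul_right J d hμ cinf_one]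
  have e3 : J.br 1 b = J.br 1 ⇑ν + d • J.br 1 1 := by
    rw [hb', br_add_right J cinf_one hν (cinf_smul d cinf_one),
      br_smul_right J d cinf_one cinf_one]
  rw [e1]
  simp only [Pi.add_apply, Pi.smul_apply, smul_eq_mul]
  rw [e2, e3, br_one_one J, hκ, hcν, hbr1μ]
  simp only [Pi.add_apply, Pi.smul_apply, Pi.zero_apply, smul_eq_mul]
  ring
end Forward

section Hadamard
open Finset
variable {V : Type*} [NormedAddCommGroup V] [NormedSpace ℝ V] [FiniteDimensional ℝ V]

lemma param_integral_hasFDerivAt (G : V × ℝ → ℝ) (hd : Differentiable ℝ G)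
    (hc : Continuous (fderiv ℝ G)) (w₀ : V) :
    HasFDerivAt (fun w => ∫ t in (0:ℝ)..1, G (w, t))
      (∫ t in (0:ℝ)..1, (fderiv ℝ G (w₀, t)).comp (ContinuousLinearMap.inl ℝ V ℝ)) w₀ := by
  have hF'c : Continuous (fun p : V × ℝ => (fderiv ℝ G p).comp (ContinuousLinearMap.inl ℝ V ℝ)) :=
    hc.clm_comp continuous_const
  obtain ⟨C, hC⟩ := ((isCompact_closedBall w₀ 1).prod (isCompact_Icc (a := (0:ℝ)) (b := 1))).exists_bound_of_continuousOn
    hF'c.continuousOn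
  refine hasFDerivAt_integral_of_dominated_of_fderiv_le'' (μ := MeasureTheory.volume)
    (F' := fun x t => (fderiv ℝ G (x, t)).comp (ContinuousLinearMap.inl ℝ V ℝ)) (bound := fun _ => C)
    (Metric.closedBall_mem_nhds w₀ one_pos) ?_ ?_ ?_ ?_ ?_ ?_
  · exact Filter.Eventually.of_forall (fun x =>
      (hd.continuous.comp (continuous_const.prodMk continuous_id)).aestronglyMeasurable)
  · exact (hd.continuous.comp (continuous_const.prodMk continuous_id)).intervalIntegrable _ _
  · exact (hF'c.comp (continuous_const.prodMk continuous_id)).aestronglyMeasurable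
  · rw [Set.uIoc_of_le zero_le_one]
    refine (MeasureTheory.ae_restrict_iff' measurableSet_Ioc).2 (Filter.Eventually.of_forall ?_)
    intro t ht x hx
    exact hC (x, t) ⟨hx, Set.Ioc_subset_Icc_self ht⟩
  · exact continuous_const.intervalIntegrable _ _
  · refine Filter.Eventually.of_forall (fun t x _ => ?_)
    exact ((hd (x, t)).hasFDerivAt).comp x (hasFDerivAt_prodMk_left x t)

lemma param_integral_contDiff (n : ℕ) : ∀ G : V × ℝ → ℝ, ContDiff ℝ n G →
    ContDiff ℝ n (fun w => ∫ t in (0:ℝ)..1, G (w, t)) := by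
  induction n with
  | zero =>
    intro G hG
    rw [Nat.cast_zero, contDiff_zero] at hG ⊢
    exact intervalIntegral.continuous_parametric_intervalIntegral_of_continuous'
      (f := fun w t => G (w, t)) hG 0 1
  | succ n ih =>
    intro G hG
    rw [Nat.cast_succ] at hG ⊢
    obtain ⟨hd, -, hfd⟩ := contDiff_succ_iff_fderiv.1 hG
    have hA := param_integral_hasFDerivAt G hd hfd.continuous
    refine contDiff_succ_iff_fderiv_apply.2 ⟨fun w => (hA w).differentiableAt, by simp, fun y => ?_⟩
    have heq : (fun x => fderiv ℝ (fun w => ∫ t in (0:ℝ)..1, G (w, t)) x y)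
        = fun x => ∫ t in (0:ℝ)..1, (fun p => fderiv ℝ G p (y, 0)) (x, t) := by
      funext x
      have hint : Continuous (fun t : ℝ => (fderiv ℝ G (x, t)).comp (ContinuousLinearMap.inl ℝ V ℝ)) :=
        (hfd.continuous.comp (continuous_const.prodMk continuous_id)).clm_comp continuous_const
      rw [(hA x).fderiv, ContinuousLinearMap.intervalIntegral_apply (hint.intervalIntegrable _ _)]
      rfl
    rw [heq]
    exact ih _ ((contDiff_succ_iff_fderiv_apply.1 hG).2.2 (y, 0))

lemma smooth_hyperplane_div (F : V → ℝ) (hF : Cinf V F) (lam : V →L[ℝ] ℝ) (e : V)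
    (hlame : lam e = 1) (x₀ : V) (hvan : ∀ w, lam (w - x₀) = 0 → F w = 0) :
    ∃ Q : V → ℝ, Cinf V Q ∧ (∀ w, F w = lam (w - x₀) * Q w) ∧
      (∀ w, lam (w - x₀) = 0 → Q w = fderiv ℝ F w e) := by
  set G : V × ℝ → ℝ := fun p => fderiv ℝ F (p.1 + ((p.2 - 1) * lam (p.1 - x₀)) • e) e with hGdef
  have hpath : ContDiff ℝ (⊤ : ℕ∞) (fun p : V × ℝ => p.1 + ((p.2 - 1) * lam (p.1 - x₀)) • e) := by
    fun_prop
  have hGs : ContDiff ℝ (⊤ : ℕ∞) G :=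
    ((hF.fderiv_right (by simp)).clm_apply contDiff_const).comp hpath
  refine ⟨fun w => ∫ t in (0:ℝ)..1, G (w, t), ?_, ?_, ?_⟩
  · show ContDiff ℝ (⊤ : ℕ∞) _
    exact contDiff_infty.2 (fun n => param_integral_contDiff n G (hGs.of_le (by exact_mod_cast le_top)))
  · intro w
    set s := lam (w - x₀) with hs
    have hφ : ∀ t ∈ Set.uIcc (0:ℝ) 1,
        HasDerivAt (fun t : ℝ => F (w + ((t - 1) * s) • e)) (s * G (w, t)) t := by
      intro t _
      have hp : HasDerivAt (fun t : ℝ => w + ((t - 1) * s) • e) (s • e) t := by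
        have := ((((hasDerivAt_id t).sub_const 1).mul_const s).smul_const e).const_add w
        simpa using this
      have hFd : HasFDerivAt F (fderiv ℝ F (w + ((t - 1) * s) • e)) (w + ((t - 1) * s) • e) :=
        (hF.differentiable (by simp) _).hasFDerivAt
      have := hFd.comp_hasDerivAt t hp
      rw [map_smul, smul_eq_mul] at this
      exact this
    have hint : IntervalIntegrable (fun t => s * G (w, t)) MeasureTheory.volume 0 1 :=
      (continuous_const.mul (hGs.continuous.comp (continuous_const.prodMk continuous_id))).intervalIntegrable _ _
    have hftc : ∫ t in (0:ℝ)..1, s * G (w, t)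
        = F (w + (((1:ℝ) - 1) * s) • e) - F (w + (((0:ℝ) - 1) * s) • e) :=
      intervalIntegral.integral_eq_sub_of_hasDerivAt hφ hint
    rw [intervalIntegral.integral_const_mul] at hftc
    have h0 : F (w + (((0:ℝ) - 1) * s) • e) = 0 := by
      apply hvan
      rw [show w + (((0:ℝ) - 1) * s) • e - x₀ = (w - x₀) + (((0:ℝ) - 1) * s) • e by abel,
        map_add, map_smul, hlame, smul_eq_mul, ← hs]
      ring
    have h1 : F (w + (((1:ℝ) - 1) * s) • e) = F w := by simp
    rw [h0, h1, sub_zero] at hftc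
    show F w = s * ∫ t in (0:ℝ)..1, G (w, t)
    exact hftc.symm
  · intro w hw
    show ∫ t in (0:ℝ)..1, G (w, t) = _
    simp only [hGdef, hw, mul_zero, zero_smul, add_zero]
    simp

set_option maxHeartbeats 1000000 in
lemma hadamard_decomposition {m : ℕ} (b : Module.Basis (Fin m) ℝ V) (g : V → ℝ) (hg : Cinf V g)
    (x : V) :
    ∃ h : Fin m → V → ℝ, (∀ i, Cinf V (h i)) ∧ (∀ i, h i x = fderiv ℝ g x (b i)) ∧
      ∀ y, g y = g x + ∑ i, (b.coord i y - b.coord i x) * h i y := by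
  classical
  set coordC : Fin m → (V →L[ℝ] ℝ) := fun i => LinearMap.toContinuousLinearMap (b.coord i)
    with hcoordC
  have hcoord_apply : ∀ i y, coordC i y = b.coord i y := fun i y => rfl
  have hcoord_basis : ∀ i j, coordC i (b j) = if i = j then 1 else 0 := by
    intro i j
    rw [hcoord_apply, Module.Basis.coord_apply, Module.Basis.repr_self, Finsupp.single_apply]
    simp [eq_comm]
  -- the linear truncation maps
  set L : ℕ → (V →L[ℝ] V) := fun k =>
    ∑ i ∈ Finset.univ.filter (fun i : Fin m => k ≤ (i:ℕ)), (coordC i).smulRight (b i) with hL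
  have hLapp : ∀ k y, L k y = ∑ i ∈ Finset.univ.filter (fun i : Fin m => k ≤ (i:ℕ)),
      (b.coord i y) • b i := by
    intro k y
    rw [hL]
    rw [ContinuousLinearMap.sum_apply]
    rfl
  have hLbasis : ∀ (k : ℕ) (j : Fin m), L k (b j) = if k ≤ (j:ℕ) then b j else 0 := by
    intro k j
    rw [hLapp]
    by_cases hj : k ≤ (j:ℕ)
    · rw [if_pos hj]
      rw [Finset.sum_eq_single j]
      · rw [Module.Basis.coord_apply, Module.Basis.repr_self]; simp
      · intro i hi hij
        rw [Module.Basis.coord_apply, Module.Basis.repr_self, Finsupp.single_apply, if_neg]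
        · simp
        · exact fun h => hij (h ▸ rfl)
      · intro hj'
        exact absurd (Finset.mem_filter.mpr ⟨Finset.mem_univ j, hj⟩) hj'
    · rw [if_neg hj]
      apply Finset.sum_eq_zero
      intro i hi
      have hik : k ≤ (i:ℕ) := (Finset.mem_filter.mp hi).2
      rw [Module.Basis.coord_apply, Module.Basis.repr_self, Finsupp.single_apply, if_neg]
      · simp
      · intro h
        subst h
        exact hj hik
  have hL0 : ∀ y, L 0 y = y := by
    intro y
    rw [hLapp]
    rw [Finset.filter_true_of_mem (fun i _ => Nat.zero_le _)]
    have := Module.Basis.sum_repr b y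
    simpa [Module.Basis.coord_apply] using this
  have hLm : ∀ y, L m y = 0 := by
    intro y
    rw [hLapp]
    rw [Finset.filter_false_of_mem, Finset.sum_empty]
    intro i _
    exact not_le.mpr i.isLt
  -- the affine truncations
  set ψ : ℕ → V → V := fun k y => x + L k (y - x) with hψ
  have hψx : ∀ k, ψ k x = x := by intro k; rw [hψ]; simp
  have hψ_smooth : ∀ k, ContDiff ℝ (⊤ : ℕ∞) (ψ k) :=
    fun k => contDiff_const.add ((L k).contDiff.comp (contDiff_id.sub contDiff_const))
  have hψ_fderiv : ∀ k, HasFDerivAt (ψ k) (L k) x := by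
    intro k
    have h1 : HasFDerivAt (fun y : V => y - x) (ContinuousLinearMap.id ℝ V) x :=
      (hasFDerivAt_id x).sub_const x
    have h2 := ((L k).hasFDerivAt.comp x h1).const_add x
    simpa [hψ, ContinuousLinearMap.comp_id] using h2
  set G : ℕ → V → ℝ := fun k => g ∘ (ψ k) with hG
  have hG_smooth : ∀ k, Cinf V (G k) := fun k => hg.comp (hψ_smooth k)
  have hG0 : ∀ y, G 0 y = g y := by intro y; rw [hG]; simp [hψ, hL0]
  have hGm : ∀ y, G m y = g x := by intro y; rw [hG]; simp [hψ, hLm]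
  have hG_fderiv : ∀ k, fderiv ℝ (G k) x = (fderiv ℝ g x).comp (L k) := by
    intro k
    have hgd : HasFDerivAt g (fderiv ℝ g x) (ψ k x) := by
      rw [hψx]
      exact (hg.differentiable (by simp) x).hasFDerivAt
    exact (hgd.comp x (hψ_fderiv k)).fderiv
  -- the difference functions and division
  have hdiff : ∀ k : Fin m, ∃ Q : V → ℝ, Cinf V Q ∧
      (∀ y, G (k:ℕ) y - G ((k:ℕ)+1) y = (b.coord k y - b.coord k x) * Q y) ∧
      Q x = fderiv ℝ g x (b k) := by
    intro k
    have hvan : ∀ y, coordC k (y - x) = 0 → G (k:ℕ) y - G ((k:ℕ)+1) y = 0 := by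
      intro y hy
      have hfil : Finset.univ.filter (fun i : Fin m => (k:ℕ) ≤ (i:ℕ))
          = insert k (Finset.univ.filter (fun i : Fin m => (k:ℕ)+1 ≤ (i:ℕ))) := by
        ext i
        simp only [Finset.mem_filter, Finset.mem_univ, true_and, Finset.mem_insert]
        constructor
        · intro h
          rcases eq_or_lt_of_le h with h' | h'
          · left; exact Fin.ext h'.symm
          · right; omega
        · rintro (rfl | h)
          · exact le_rfl
          · omega
      have hψeq : ψ (k:ℕ) y = ψ ((k:ℕ)+1) y := by
        rw [hψ]
        simp only
        congr 1
        rw [hLapp, hLapp, hfil, Finset.sum_insert (by simp)]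
        rw [show b.coord k (y - x) = coordC k (y - x) from rfl, hy, zero_smul, zero_add]
      rw [hG]
      simp only [Function.comp_apply, hψeq, sub_self]
    have hF_an : Cinf V (fun y => G (k:ℕ) y - G ((k:ℕ)+1) y) :=
        (hG_smooth _).sub (hG_smooth _)
    have hlame : coordC k (b k) = 1 := by rw [hcoord_basis]; simp
    obtain ⟨Q, hQan, hQid, hQhyp⟩ := smooth_hyperplane_div
      (fun y => G (k:ℕ) y - G ((k:ℕ)+1) y) hF_an (coordC k) (b k) hlame x hvan
    refine ⟨Q, hQan, ?_, ?_⟩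
    · intro y
      have := hQid y
      rwa [hcoord_apply, map_sub] at this
    · have hx0 : coordC k (x - x) = 0 := by simp
      rw [hQhyp x hx0]
      have hsub : fderiv ℝ (fun y => G (k:ℕ) y - G ((k:ℕ)+1) y) x
          = fderiv ℝ (G (k:ℕ)) x - fderiv ℝ (G ((k:ℕ)+1)) x := by
        apply fderiv_sub
        · exact ((hG_smooth _).differentiable (by simp)).differentiableAt
        · exact ((hG_smooth _).differentiable (by simp)).differentiableAt
      rw [hsub]
      rw [ContinuousLinearMap.sub_apply, hG_fderiv, hG_fderiv]
      rw [ContinuousLinearMap.comp_apply, ContinuousLinearMap.comp_apply]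
      rw [hLbasis, hLbasis]
      rw [if_pos (le_refl _), if_neg (by omega)]
      simp
  choose h hh_smooth hh_id hh_x using hdiff
  refine ⟨h, hh_smooth, hh_x, ?_⟩
  intro y
  have htel : ∑ k ∈ Finset.range m, (G k y - G (k+1) y) = G 0 y - G m y :=
    Finset.sum_range_sub' (fun k => G k y) m
  rw [hG0, hGm] at htel
  have hsum : ∑ k ∈ Finset.range m, (G k y - G (k+1) y)
      = ∑ i : Fin m, (b.coord i y - b.coord i x) * h i y := by
    rw [Finset.sum_range]
    apply Finset.sum_congr rfl
    intro i _
    exact hh_id i y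
  rw [hsum] at htel
  linarith [htel]
end Hadamard

section Jet
open Finset
variable {V : Type*} [NormedAddCommGroup V] [NormedSpace ℝ V] [FiniteDimensional ℝ V]
  (J : JacobiBracket V (Cinf V))

lemma cinf_sum {ι : Type*} (s : Finset ι) (u : ι → V → ℝ) (h : ∀ i ∈ s, Cinf V (u i)) :
    Cinf V (∑ i ∈ s, u i) := by
  have h2 : Cinf V (fun y => ∑ i ∈ s, u i y) := ContDiff.sum (fun i hi => h i hi)
  have : (∑ i ∈ s, u i) = fun y => ∑ i ∈ s, u i y := by
    funext y
    exact Finset.sum_apply y s u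
  rw [this]
  exact h2

lemma br_sum_right {ι : Type*} (s : Finset ι) (u : ι → V → ℝ) {f : V → ℝ}
    (hf : Cinf V f) (hu : ∀ i ∈ s, Cinf V (u i)) :
    J.br f (∑ i ∈ s, u i) = ∑ i ∈ s, J.br f (u i) := by
  classical
  induction s using Finset.induction_on with
  | empty => simpa using br_zero_right J hf
  | @insert a s ha ih =>
      rw [Finset.sum_insert ha, Finset.sum_insert ha,
        br_add_right J hf (hu a (Finset.mem_insert_self a s))
          (cinf_sum s u (fun i hi => hu i (Finset.mem_insert_of_mem hi))),
        ih (fun i hi => hu i (Finset.mem_insert_of_mem hi))]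

set_option maxHeartbeats 1000000 in
/-- The bracket only depends on the first jet: explicit formula in a basis. -/
lemma br_jet {m : ℕ} (b : Module.Basis (Fin m) ℝ V) {f g : V → ℝ}
    (hf : Cinf V f) (hg : Cinf V g) (x : V) :
    J.br f g x = g x * J.br f 1 x
      + ∑ i, (J.br f ⇑(b.coord i) x - b.coord i x * J.br f 1 x) * fderiv ℝ g x (b i) := by
  classical
  obtain ⟨h, hhs, hhx, hid⟩ := hadamard_decomposition b g hg x
  set p : Fin m → V → ℝ := fun i y => b.coord i y - b.coord i x with hp
  have hpx : ∀ i, p i x = 0 := by intro i; simp [hp]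
  have hps : ∀ i, Cinf V (p i) := fun i => (cinf_linear (b.coord i)).sub contDiff_const
  have hterm : ∀ i, Cinf V (p i * h i) := fun i => cinf_mul (hps i) (hhs i)
  have hgdecomp : g = (g x) • (1:V→ℝ) + ∑ i, p i * h i := by
    funext y
    simp only [Pi.add_apply, Pi.smul_apply, Pi.one_apply, smul_eq_mul, mul_one,
      Finset.sum_apply, Pi.mul_apply, hp]
    exact hid y
  have e1 : J.br f g = J.br f ((g x) • (1:V→ℝ)) + J.br f (∑ i, p i * h i) := by
    conv_lhs => rw [hgdecomp]
    exact br_add_right J hf (cinf_smul _ cinf_one)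
      (cinf_sum Finset.univ _ (fun i _ => hterm i))
  have e2 : J.br f ((g x) • (1:V→ℝ)) = (g x) • J.br f 1 := br_smul_right J _ hf cinf_one
  have e3 : J.br f (∑ i, p i * h i) = ∑ i, J.br f (p i * h i) :=
    br_sum_right J Finset.univ _ hf (fun i _ => hterm i)
  have e4 : ∀ i, J.br f (p i * h i) x = J.br f (p i) x * h i x := by
    intro i
    have := congrFun (J.leibniz f (p i) (h i) hf (hps i) (hhs i)) x
    simp only [Pi.add_apply, Pi.sub_apply, Pi.mul_apply] at this
    rw [this, hpx i]
    ring
  have e5 : ∀ i, J.br f (p i) x = J.br f ⇑(b.coord i) x - b.coord i x * J.br f 1 x := by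
    intro i
    have hpi : p i = ⇑(b.coord i) + (-(b.coord i x)) • (1:V→ℝ) := by
      funext y
      simp [hp]
      ring
    rw [hpi, br_add_right J hf (cinf_linear _) (cinf_smul _ cinf_one),
      br_smul_right J _ hf cinf_one]
    simp only [Pi.add_apply, Pi.smul_apply, smul_eq_mul]
    ring
  have := congrFun e1 x
  simp only [Pi.add_apply] at this
  rw [this, e2, e3]
  simp only [Pi.smul_apply, smul_eq_mul, Finset.sum_apply]
  have hsum2 : ∑ i, J.br f (p i * h i) x
      = ∑ i, (J.br f ⇑(b.coord i) x - b.coord i x * J.br f 1 x) * fderiv ℝ g x (b i) := by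
    apply Finset.sum_congr rfl
    intro i _
    rw [e4 i, e5 i, hhx i]
  rw [hsum2]
end Jet

section EulerCalc
open Finset
variable {V : Type*} [NormedAddCommGroup V] [NormedSpace ℝ V]

lemma cinf_pd {u : V → ℝ} (hu : Cinf V u) (c : V) : Cinf V (fun y => fderiv ℝ u y c) :=
  (hu.fderiv_right (by simp)).clm_apply contDiff_const

lemma eulerOp_mul {u v : V → ℝ} (hu : Cinf V u) (hv : Cinf V v) (x : V) :
    eulerOp (fun y => u y * v y) x = eulerOp u x * v x + u x * eulerOp v x := by
  simp only [eulerOp]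
  rw [fderiv_fun_mul ((hu.differentiable (by simp)) x) ((hv.differentiable (by simp)) x)]
  simp only [ContinuousLinearMap.add_apply, ContinuousLinearMap.smul_apply, smul_eq_mul]
  ring

lemma eulerOp_sub {u v : V → ℝ} (hu : Cinf V u) (hv : Cinf V v) (x : V) :
    eulerOp (fun y => u y - v y) x = eulerOp u x - eulerOp v x := by
  simp only [eulerOp]
  rw [fderiv_fun_sub ((hu.differentiable (by simp)) x) ((hv.differentiable (by simp)) x)]
  simp

lemma eulerOp_add {u v : V → ℝ} (hu : Cinf V u) (hv : Cinf V v) (x : V) :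
    eulerOp (fun y => u y + v y) x = eulerOp u x + eulerOp v x := by
  simp only [eulerOp]
  rw [fderiv_fun_add ((hu.differentiable (by simp)) x) ((hv.differentiable (by simp)) x)]
  simp

lemma eulerOp_fsum {ι : Type*} (s : Finset ι) (w : ι → V → ℝ) (hw : ∀ i ∈ s, Cinf V (w i))
    (x : V) :
    eulerOp (fun y => ∑ i ∈ s, w i y) x = ∑ i ∈ s, eulerOp (w i) x := by
  simp only [eulerOp]
  rw [fderiv_fun_sum (fun i hi => ((hw i hi).differentiable (by simp)) x)]
  rw [ContinuousLinearMap.sum_apply]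

lemma eulerOp_const_mul (c : ℝ) {u : V → ℝ} (hu : Cinf V u) (x : V) :
    eulerOp (fun y => c * u y) x = c * eulerOp u x := by
  simp only [eulerOp]
  rw [fderiv_const_mul ((hu.differentiable (by simp)) x)]
  simp

lemma pd_euler {u : V → ℝ} (hu : Cinf V u) (x c : V) :
    eulerOp (fun y => fderiv ℝ u y c) x = fderiv ℝ (eulerOp u) x c - fderiv ℝ u x c := by
  have hFd : ContDiff ℝ (⊤ : ℕ∞) (fderiv ℝ u) := hu.fderiv_right (by simp)
  have hFdd : HasFDerivAt (fderiv ℝ u) (fderiv ℝ (fderiv ℝ u) x) x :=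
    ((hFd.differentiable (by simp)) x).hasFDerivAt
  have h1 : HasFDerivAt (fun y => fderiv ℝ u y c)
      ((fderiv ℝ (fderiv ℝ u) x).flip c) x := by
    have := hFdd.clm_apply (hasFDerivAt_const c x)
    simpa using this
  have h2 : HasFDerivAt (eulerOp u)
      ((fderiv ℝ u x).comp (ContinuousLinearMap.id ℝ V)
        + (fderiv ℝ (fderiv ℝ u) x).flip x) x := by
    have := hFdd.clm_apply (hasFDerivAt_id x)
    exact this
  have hsym : fderiv ℝ (fderiv ℝ u) x x c = fderiv ℝ (fderiv ℝ u) x c x :=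
    (hu.contDiffAt.isSymmSndFDerivAt (by rw [minSmoothness_of_isRCLikeNormedField]; exact WithTop.coe_le_coe.2 le_top)) x c
  have e1 : eulerOp (fun y => fderiv ℝ u y c) x = fderiv ℝ (fderiv ℝ u) x x c := by
    show (fderiv ℝ (fun y => fderiv ℝ u y c) x) x = _
    rw [h1.fderiv]
    simp
  have e2 : fderiv ℝ (eulerOp u) x c = fderiv ℝ u x c + fderiv ℝ (fderiv ℝ u) x c x := by
    rw [h2.fderiv]
    simp
  rw [e1, e2, hsym]
  ring

lemma euler_expansion [FiniteDimensional ℝ V] {m : ℕ} (b : Module.Basis (Fin m) ℝ V) (u : V → ℝ)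
    (x : V) : eulerOp u x = ∑ i, b.coord i x * fderiv ℝ u x (b i) := by
  show (fderiv ℝ u x) x = _
  have hx : (fderiv ℝ u x) x = (fderiv ℝ u x) (∑ i, b.repr x i • b i) := by
    rw [Module.Basis.sum_repr]
  rw [hx, map_sum]
  apply Finset.sum_congr rfl
  intro i _
  rw [map_smul, smul_eq_mul, Module.Basis.coord_apply]

lemma fderiv_linear [FiniteDimensional ℝ V] (μ : V →ₗ[ℝ] ℝ) (y : V) (c : V) :
    fderiv ℝ ⇑μ y c = μ c := by
  have h2 : fderiv ℝ ⇑μ y = LinearMap.toContinuousLinearMap μ :=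
    (LinearMap.toContinuousLinearMap μ).fderiv
  rw [h2]
  rfl
end EulerCalc

section Reverse
open Finset
variable {V : Type*} [NormedAddCommGroup V] [NormedSpace ℝ V] [FiniteDimensional ℝ V]

set_option maxHeartbeats 4000000 in
theorem reverse_dir (J : JacobiBracket V (Cinf V)) {m : ℕ} (b : Module.Basis (Fin m) ℝ V)
    (hlin : ∀ μ ν : V →ₗ[ℝ] ℝ, ∃ κ : V →ₗ[ℝ] ℝ, J.br ⇑μ ⇑ν = ⇑κ)
    (hconst : ∀ μ : V →ₗ[ℝ] ℝ, ∃ c : ℝ, J.br 1 ⇑μ = fun _ => c) :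
    ∀ f g, Cinf V f → Cinf V g →
      eulerOp (J.br f g) = J.br (eulerOp f) g + J.br f (eulerOp g) - J.br f g := by
  classical
  choose γ hγ using fun i : Fin m => hconst (b.coord i)
  choose K hK using fun (i : Fin m) (j : Fin m) => hlin (b.coord i) (b.coord j)
  set E : (V → ℝ) → V → ℝ := fun u y => ∑ i, γ i * fderiv ℝ u y (b i) with hE
  have hEc : ∀ u, Cinf V u → Cinf V (E u) := by
    intro u hu
    exact ContDiff.sum (fun i _ => contDiff_const.mul (cinf_pd hu (b i)))
  -- F1 : bracket with 1
  have F1 : ∀ v, Cinf V v → ∀ x, J.br 1 v x = E v x := by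
    intro v hv x
    rw [br_jet J b cinf_one hv x]
    have h0 : J.br 1 (1:V→ℝ) x = 0 := by rw [br_one_one J]; rfl
    have hs : ∑ i, (J.br 1 ⇑(b.coord i) x - b.coord i x * 0)
        * fderiv ℝ v x (b i) = ∑ i, γ i * fderiv ℝ v x (b i) := by
      apply sum_congr rfl
      intro i _
      rw [hγ i]
      ring
    rw [h0, hs]
    simp only [hE]
    ring
  have F0 : ∀ u, Cinf V u → ∀ x, J.br u 1 x = -(E u x) := by
    intro u hu x
    have h := congrFun (J.antisymm u 1 hu cinf_one) x
    simp only [Pi.neg_apply] at h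
    rw [h, F1 u hu x]
  -- coordinates: E of a coordinate function
  have hEcoord : ∀ i x, E ⇑(b.coord i) x = γ i := by
    intro i x
    rw [hE]
    simp only
    rw [Finset.sum_eq_single i]
    · rw [fderiv_linear (b.coord i) x (b i), Module.Basis.coord_apply, Module.Basis.repr_self]
      simp
    · intro j _ hji
      rw [fderiv_linear (b.coord i) x (b j), Module.Basis.coord_apply, Module.Basis.repr_self,
        Finsupp.single_apply, if_neg hji]
      simp
    · simp
  -- F2 : bracket with a coordinate
  have F2 : ∀ u, Cinf V u → ∀ x i, J.br u ⇑(b.coord i) x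
      = γ i * u x - (∑ j, K i j x * fderiv ℝ u x (b j)) - γ i * eulerOp u x := by
    intro u hu x i
    have hanti := congrFun (J.antisymm ⇑(b.coord i) u (cinf_linear _) hu) x
    simp only [Pi.neg_apply] at hanti
    have hflip : J.br u ⇑(b.coord i) x = -(J.br ⇑(b.coord i) u x) := by
      rw [hanti]; ring
    rw [hflip, br_jet J b (cinf_linear (b.coord i)) hu x]
    have hbr1 : J.br ⇑(b.coord i) (1:V→ℝ) x = -(γ i) := by
      rw [F0 ⇑(b.coord i) (cinf_linear _) x, hEcoord i x]
    have hsum : ∑ j, (J.br ⇑(b.coord i) ⇑(b.coord j) x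
          - b.coord j x * (-(γ i))) * fderiv ℝ u x (b j)
        = (∑ j, K i j x * fderiv ℝ u x (b j))
          + γ i * (∑ j, b.coord j x * fderiv ℝ u x (b j)) := by
      rw [Finset.mul_sum, ← Finset.sum_add_distrib]
      apply sum_congr rfl
      intro j _
      rw [hK i j]
      ring
    rw [hbr1, hsum, ← euler_expansion b u x]
    ring
  -- F3 : the full structure formula
  have F3 : ∀ u v, Cinf V u → Cinf V v → ∀ x, J.br u v x
      = u x * E v x - v x * E u x
        - (∑ i, ∑ j, K i j x * (fderiv ℝ u x (b j) * fderiv ℝ v x (b i)))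
        - eulerOp u x * E v x + E u x * eulerOp v x := by
    intro u v hu hv x
    rw [br_jet J b hu hv x, F0 u hu x]
    have hsum : ∑ i, (J.br u ⇑(b.coord i) x - b.coord i x * (-(E u x))) * fderiv ℝ v x (b i)
        = (∑ i, γ i * fderiv ℝ v x (b i)) * u x
          - (∑ i, ∑ j, K i j x * (fderiv ℝ u x (b j) * fderiv ℝ v x (b i)))
          - (∑ i, γ i * fderiv ℝ v x (b i)) * eulerOp u x
          + (∑ i, b.coord i x * fderiv ℝ v x (b i)) * E u x := by
      rw [Finset.sum_mul, Finset.sum_mul, Finset.sum_mul, ← Finset.sum_sub_distrib,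
        ← Finset.sum_sub_distrib, ← Finset.sum_add_distrib]
      apply sum_congr rfl
      intro i _
      rw [F2 u hu x i]
      have hinner : (∑ j, K i j x * fderiv ℝ u x (b j)) * fderiv ℝ v x (b i)
          = ∑ j, K i j x * (fderiv ℝ u x (b j) * fderiv ℝ v x (b i)) := by
        rw [Finset.sum_mul]
        apply sum_congr rfl
        intro j _
        ring
      rw [← hinner]
      ring
    rw [hsum, ← euler_expansion b v x, hE]
    ring
  -- main computation
  intro f g hf hg
  have hΔf : Cinf V (eulerOp f) := cinf_eulerOp hf
  have hΔg : Cinf V (eulerOp g) := cinf_eulerOp hg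
  have hEf : Cinf V (E f) := hEc f hf
  have hEg : Cinf V (E g) := hEc g hg
  set T3 : V → ℝ := fun y => ∑ i, ∑ j, K i j y
      * (fderiv ℝ f y (b j) * fderiv ℝ g y (b i)) with hT3
  have hT3c : Cinf V T3 :=
    ContDiff.sum (fun i _ => ContDiff.sum (fun j _ =>
      (cinf_linear (K i j)).mul ((cinf_pd hf (b j)).mul (cinf_pd hg (b i)))))
  have hfun : J.br f g = fun y =>
      f y * E g y - g y * E f y - T3 y - eulerOp f y * E g y + E f y * eulerOp g y :=
    funext (fun y => F3 f g hf hg y)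
  funext x
  simp only [Pi.add_apply, Pi.sub_apply]
  rw [hfun]
  -- value of eulerOp (E u) at x
  have hEval : ∀ u, Cinf V u → eulerOp (E u) x
      = (∑ i, γ i * fderiv ℝ (eulerOp u) x (b i)) - (∑ i, γ i * fderiv ℝ u x (b i)) := by
    intro u hu
    have h1 : eulerOp (E u) x = ∑ i, eulerOp (fun y => γ i * fderiv ℝ u y (b i)) x :=
      eulerOp_fsum Finset.univ _ (fun i _ => contDiff_const.mul (cinf_pd hu (b i))) x
    rw [h1, ← Finset.sum_sub_distrib]
    apply sum_congr rfl
    intro i _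
    rw [eulerOp_const_mul (γ i) (cinf_pd hu (b i)) x, pd_euler hu x (b i)]
    ring
  -- value of eulerOp T3 at x
  have hT3val : eulerOp T3 x
      = (∑ i, ∑ j, K i j x * (fderiv ℝ (eulerOp f) x (b j) * fderiv ℝ g x (b i)))
        + (∑ i, ∑ j, K i j x * (fderiv ℝ f x (b j) * fderiv ℝ (eulerOp g) x (b i)))
        - (∑ i, ∑ j, K i j x * (fderiv ℝ f x (b j) * fderiv ℝ g x (b i))) := by
    have hinnerc : ∀ i : Fin m, Cinf V (fun y => ∑ j, K i j y
        * (fderiv ℝ f y (b j) * fderiv ℝ g y (b i))) := fun i =>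
      ContDiff.sum (fun j _ => (cinf_linear (K i j)).mul
        ((cinf_pd hf (b j)).mul (cinf_pd hg (b i))))
    have hstep : eulerOp T3 x = ∑ i, ∑ j, eulerOp (fun y => K i j y
        * (fderiv ℝ f y (b j) * fderiv ℝ g y (b i))) x := by
      have h1 : eulerOp T3 x = ∑ i, eulerOp (fun y => ∑ j, K i j y
          * (fderiv ℝ f y (b j) * fderiv ℝ g y (b i))) x :=
        eulerOp_fsum Finset.univ _ (fun i _ => hinnerc i) x
      rw [h1]
      apply sum_congr rfl
      intro i _
      exact eulerOp_fsum Finset.univ _ (fun j _ => (cinf_linear (K i j)).mul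
        ((cinf_pd hf (b j)).mul (cinf_pd hg (b i)))) x
    rw [hstep]
    have hij : ∀ i j, eulerOp (fun y => K i j y
        * (fderiv ℝ f y (b j) * fderiv ℝ g y (b i))) x
        = K i j x * (fderiv ℝ (eulerOp f) x (b j) * fderiv ℝ g x (b i))
          + K i j x * (fderiv ℝ f x (b j) * fderiv ℝ (eulerOp g) x (b i))
          - K i j x * (fderiv ℝ f x (b j) * fderiv ℝ g x (b i)) := by
      intro i j
      rw [eulerOp_mul (cinf_linear (K i j)) ((cinf_pd hf (b j)).mul (cinf_pd hg (b i))) x]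
      have hKlin : eulerOp (fun y => K i j y) x = K i j x :=
        congrFun (eulerOp_linear (K i j)) x
      rw [hKlin, eulerOp_mul (cinf_pd hf (b j)) (cinf_pd hg (b i)) x,
        pd_euler hf x (b j), pd_euler hg x (b i)]
      ring
    have hsplit : ∀ i : Fin m, ∑ j, eulerOp (fun y => K i j y
        * (fderiv ℝ f y (b j) * fderiv ℝ g y (b i))) x
        = (∑ j, K i j x * (fderiv ℝ (eulerOp f) x (b j) * fderiv ℝ g x (b i)))
          + (∑ j, K i j x * (fderiv ℝ f x (b j) * fderiv ℝ (eulerOp g) x (b i)))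
          - (∑ j, K i j x * (fderiv ℝ f x (b j) * fderiv ℝ g x (b i))) := by
      intro i
      rw [← Finset.sum_add_distrib, ← Finset.sum_sub_distrib]
      apply sum_congr rfl
      intro j _
      rw [hij i j]
    rw [show (∑ i : Fin m, ∑ j, eulerOp (fun y => K i j y
        * (fderiv ℝ f y (b j) * fderiv ℝ g y (b i))) x) = _ from sum_congr rfl
      (fun i _ => hsplit i)]
    rw [← Finset.sum_add_distrib, ← Finset.sum_sub_distrib]
  -- expand the left-hand side using eulerOp calculus
  have c1 : Cinf V (fun y => f y * E g y) := hf.mul hEg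
  have c2 : Cinf V (fun y => g y * E f y) := hg.mul hEf
  have c4 : Cinf V (fun y => eulerOp f y * E g y) := hΔf.mul hEg
  have c5 : Cinf V (fun y => E f y * eulerOp g y) := hEf.mul hΔg
  rw [eulerOp_add (((c1.sub c2).sub hT3c).sub c4) c5 x,
    eulerOp_sub ((c1.sub c2).sub hT3c) c4 x,
    eulerOp_sub (c1.sub c2) hT3c x,
    eulerOp_sub c1 c2 x,
    eulerOp_mul hf hEg x, eulerOp_mul hg hEf x, eulerOp_mul hΔf hEg x,
    eulerOp_mul hEf hΔg x, hT3val, hEval f hf, hEval g hg]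
  -- expand the right-hand side
  rw [F3 (eulerOp f) g hΔf hg x, F3 f (eulerOp g) hf hΔg x]
  simp only [hE, hT3]
  ring
end Reverse


/-- a Jacobi bracket on `C^∞(V,ℝ)`, `V` finite-dimensional, is
homogeneous (i.e. `Δ{f,g} = {Δf,g} + {f,Δg} − {f,g}`) if and only if the bracket of
two linear functions is linear, the bracket of two affine functions is affine, and
`{1,ℓ}` is constant for every linear `ℓ`. -/
theorem stmt7 (V : Type*) [NormedAddCommGroup V] [NormedSpace ℝ V]
    [FiniteDimensional ℝ V]
    (J : JacobiBracket V (Cinf V)) :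
    (∀ f g, Cinf V f → Cinf V g →
      eulerOp (J.br f g) = J.br (eulerOp f) g + J.br f (eulerOp g) - J.br f g) ↔
    ((∀ μ ν : V →ₗ[ℝ] ℝ, ∃ κ : V →ₗ[ℝ] ℝ, J.br ⇑μ ⇑ν = ⇑κ) ∧
     (∀ a b, Cinf V a → Cinf V b → IsAffineFn a → IsAffineFn b → IsAffineFn (J.br a b)) ∧
     (∀ μ : V →ₗ[ℝ] ℝ, ∃ c : ℝ, J.br 1 ⇑μ = fun _ => c)) := by
  constructor
  · intro H
    exact forward_dir J H
  · rintro ⟨hlin, _haff, hconst⟩ f g hf hg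
    exact reverse_dir J (Module.finBasis ℝ V) hlin hconst f g hf hg
end

section
/- On ℝ³ with coordinates (x₁,x₂,x₃), define the bracket {f,g} := x₁x₃·(∂₂f·∂₃g − ∂₃f·∂₂g) − x₁²·(∂₁f·∂₂g − ∂₂f·∂₁g) + x₁·(f·∂₂g − g·∂₂f) for f,g ∈ C^∞(ℝ³,ℝ). Then {·,·} is a Jacobi bracket on C^∞(ℝ³,ℝ) that is affine (the bracket of two affine functions is affine), but it is not strongly affine: writing p₂(x)=x₂ and p₃(x)=x₃, the function {p₂,p₃} + p₃·{1,p₂}, which equals x ↦ x₁x₃, is not an affine function. -/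
/-- The `i`-th partial derivative of a function on ℝ³. -/
noncomputable def pd (i : Fin 3) (f : (Fin 3 → ℝ) → ℝ) (x : Fin 3 → ℝ) : ℝ :=
  fderiv ℝ f x (Pi.single i 1)

/-- The bracket `{f,g} = x₁x₃(∂₂f ∂₃g − ∂₃f ∂₂g) − x₁²(∂₁f ∂₂g − ∂₂f ∂₁g)
+ x₁(f ∂₂g − g ∂₂f)` on ℝ³ (coordinates `x₁ = x 0`, `x₂ = x 1`, `x₃ = x 2`). -/
noncomputable def exBr (f g : (Fin 3 → ℝ) → ℝ) : (Fin 3 → ℝ) → ℝ :=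
  fun x =>
    x 0 * x 2 * (pd 1 f x * pd 2 g x - pd 2 f x * pd 1 g x)
      - x 0 ^ 2 * (pd 0 f x * pd 1 g x - pd 1 f x * pd 0 g x)
      + x 0 * (f x * pd 1 g x - g x * pd 1 f x)

section Stmt10Aux

variable {f g h : (Fin 3 → ℝ) → ℝ} {x : Fin 3 → ℝ}

@[fun_prop]
theorem contDiff_pd (i : Fin 3) (hf : ContDiff ℝ (⊤ : ℕ∞) f) : ContDiff ℝ (⊤ : ℕ∞) (pd i f) :=
  (hf.fderiv_right (by simp)).clm_apply contDiff_const

@[fun_prop]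
theorem differentiable_pd (i : Fin 3) (hf : ContDiff ℝ (⊤ : ℕ∞) f) : Differentiable ℝ (pd i f) :=
  (contDiff_pd i hf).differentiable (by simp)

theorem pd_coord (i j : Fin 3) (x : Fin 3 → ℝ) :
    pd i (fun y => y j) x = if j = i then (1:ℝ) else 0 := by
  have h : (fun y : Fin 3 → ℝ => y j)
      = ⇑(ContinuousLinearMap.proj j (R := ℝ) (φ := fun _ : Fin 3 => ℝ)) := rfl
  unfold pd
  rw [h, ContinuousLinearMap.fderiv]
  simp [Pi.single_apply]

theorem pd_mul (i : Fin 3) (hf : DifferentiableAt ℝ f x) (hg : DifferentiableAt ℝ g x) :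
    pd i (fun y => f y * g y) x = f x * pd i g x + g x * pd i f x := by
  unfold pd; rw [fderiv_fun_mul hf hg]; simp

theorem pd_add (i : Fin 3) (hf : DifferentiableAt ℝ f x) (hg : DifferentiableAt ℝ g x) :
    pd i (fun y => f y + g y) x = pd i f x + pd i g x := by
  unfold pd; rw [fderiv_fun_add hf hg]; simp

theorem pd_sub (i : Fin 3) (hf : DifferentiableAt ℝ f x) (hg : DifferentiableAt ℝ g x) :
    pd i (fun y => f y - g y) x = pd i f x - pd i g x := by
  unfold pd; rw [fderiv_fun_sub hf hg]; simp

theorem pd_addPi (i : Fin 3) (hf : DifferentiableAt ℝ f x) (hg : DifferentiableAt ℝ g x) :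
    pd i (f + g) x = pd i f x + pd i g x := pd_add i hf hg

theorem pd_mulPi (i : Fin 3) (hf : DifferentiableAt ℝ f x) (hg : DifferentiableAt ℝ g x) :
    pd i (f * g) x = f x * pd i g x + g x * pd i f x := pd_mul i hf hg

theorem pd_smulPi (i : Fin 3) (c : ℝ) (hf : DifferentiableAt ℝ f x) :
    pd i (c • f) x = c * pd i f x := by
  unfold pd
  rw [show c • f = (fun y => c • f y) from rfl, fderiv_fun_const_smul hf c]
  simp

theorem pd_one (i : Fin 3) (x : Fin 3 → ℝ) : pd i (1 : (Fin 3 → ℝ) → ℝ) x = 0 := by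
  unfold pd
  rw [show (1 : (Fin 3 → ℝ) → ℝ) = fun _ => (1:ℝ) from rfl, fderiv_fun_const]
  simp

theorem pd_symm (hf : ContDiff ℝ (⊤ : ℕ∞) f) (i j : Fin 3) (x : Fin 3 → ℝ) :
    pd i (pd j f) x = pd j (pd i f) x := by
  have hd : Differentiable ℝ f := hf.differentiable (by simp)
  have h2 : DifferentiableAt ℝ (fderiv ℝ f) x :=
    ((hf.fderiv_right (m := (⊤ : ℕ∞)) (by simp)).differentiable (by simp)) x
  have e : ∀ a b : Fin 3, pd a (pd b f) x
      = fderiv ℝ (fderiv ℝ f) x (Pi.single a 1) (Pi.single b 1) := by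
    intro a b
    unfold pd
    rw [fderiv_clm_apply h2 (differentiableAt_const _)]
    simp
  rw [e i j, e j i]
  exact second_derivative_symmetric (fun y => (hd y).hasFDerivAt) h2.hasFDerivAt _ _

theorem pd_affine (μ : (Fin 3 → ℝ) →ₗ[ℝ] ℝ) (c : ℝ) (i : Fin 3) (x : Fin 3 → ℝ) :
    pd i (fun y => μ y + c) x = μ (Pi.single i 1) := by
  unfold pd
  have h1 : HasFDerivAt (fun y => μ y + c) (LinearMap.toContinuousLinearMap μ) x :=
    (LinearMap.toContinuousLinearMap μ).hasFDerivAt.add_const c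
  rw [h1.fderiv]
  rfl

theorem lin_decomp (μ : (Fin 3 → ℝ) →ₗ[ℝ] ℝ) (x : Fin 3 → ℝ) :
    μ x = x 0 * μ (Pi.single 0 1) + x 1 * μ (Pi.single 1 1) + x 2 * μ (Pi.single 2 1) := by
  have hx : x = x 0 • (Pi.single 0 1 : Fin 3 → ℝ) + x 1 • (Pi.single 1 1 : Fin 3 → ℝ)
      + x 2 • (Pi.single 2 1 : Fin 3 → ℝ) := by
    funext j; fin_cases j <;> simp [Pi.single_apply]
  conv_lhs => rw [hx]
  simp [map_add, map_smul, smul_eq_mul]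

set_option maxHeartbeats 2000000 in
noncomputable def exJ : JacobiBracket (Fin 3 → ℝ) (Cinf (Fin 3 → ℝ)) where
  br := exBr
  smooth_br := by
    intro f g hf hg
    have hf' : ContDiff ℝ (⊤ : ℕ∞) f := hf
    have hg' : ContDiff ℝ (⊤ : ℕ∞) g := hg
    show ContDiff ℝ (⊤ : ℕ∞) (exBr f g)
    unfold exBr
    fun_prop
  add_left := by
    intro f g h hf hg hh
    have hf1 : Differentiable ℝ f := (show ContDiff ℝ (⊤ : ℕ∞) f from hf).differentiable (by simp)
    have hg1 : Differentiable ℝ g := (show ContDiff ℝ (⊤ : ℕ∞) g from hg).differentiable (by simp)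
    funext x
    simp (disch := fun_prop) only [exBr, Pi.add_apply, pd_addPi]
    ring
  smul_left := by
    intro c f g hf hg
    have hf1 : Differentiable ℝ f := (show ContDiff ℝ (⊤ : ℕ∞) f from hf).differentiable (by simp)
    funext x
    simp (disch := fun_prop) only [exBr, Pi.smul_apply, smul_eq_mul, pd_smulPi]
    ring
  antisymm := by
    intro f g hf hg
    funext x
    simp only [exBr, Pi.neg_apply]
    ring
  jacobi := by
    intro f g h hf hg hh
    have hf' : ContDiff ℝ (⊤ : ℕ∞) f := hf
    have hg' : ContDiff ℝ (⊤ : ℕ∞) g := hg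
    have hh' : ContDiff ℝ (⊤ : ℕ∞) h := hh
    have hf1 : Differentiable ℝ f := hf'.differentiable (by simp)
    have hg1 : Differentiable ℝ g := hg'.differentiable (by simp)
    have hh1 : Differentiable ℝ h := hh'.differentiable (by simp)
    funext x
    simp only [Pi.add_apply, Pi.zero_apply]
    unfold exBr
    simp (disch := fun_prop) only [pd_mul, pd_add, pd_sub, pd_coord, pow_two]
    simp only [show ((0:Fin 3) = 1) = False from by decide, show ((0:Fin 3) = 2) = False from by decide,
      show ((1:Fin 3) = 0) = False from by decide, show ((1:Fin 3) = 2) = False from by decide,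
      show ((2:Fin 3) = 0) = False from by decide, show ((2:Fin 3) = 1) = False from by decide,
      if_true, if_false, eq_self_iff_true, mul_zero, zero_mul, mul_one, one_mul, add_zero,
      zero_add, sub_zero, zero_sub]
    try simp only [pd_symm hf' 1 0 x, pd_symm hf' 2 0 x, pd_symm hf' 2 1 x,
      pd_symm hg' 1 0 x, pd_symm hg' 2 0 x, pd_symm hg' 2 1 x,
      pd_symm hh' 1 0 x, pd_symm hh' 2 0 x, pd_symm hh' 2 1 x]
    ring
  leibniz := by
    intro f g h hf hg hh
    have hf1 : Differentiable ℝ f := (show ContDiff ℝ (⊤ : ℕ∞) f from hf).differentiable (by simp)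
    have hg1 : Differentiable ℝ g := (show ContDiff ℝ (⊤ : ℕ∞) g from hg).differentiable (by simp)
    have hh1 : Differentiable ℝ h := (show ContDiff ℝ (⊤ : ℕ∞) h from hh).differentiable (by simp)
    funext x
    simp (disch := fun_prop) only [exBr, Pi.mul_apply, Pi.add_apply, Pi.sub_apply,
      Pi.one_apply, pd_mulPi, pd_one]
    ring

theorem exBr_affine (μ ν : (Fin 3 → ℝ) →ₗ[ℝ] ℝ) (c d : ℝ) :
    exBr (fun y => μ y + c) (fun y => ν y + d)
      = fun x => (c * ν (Pi.single 1 1) - d * μ (Pi.single 1 1)) * x 0 := by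
  funext x
  simp only [exBr, pd_affine]
  rw [lin_decomp μ x, lin_decomp ν x]
  ring

end Stmt10Aux

/-- the bracket `exBr` is a Jacobi bracket on `C^∞(ℝ³,ℝ)` which is
affine but not strongly affine: the hamiltonian operator of the affine function
`p₂ = x₂` applied to `p₃ = x₃`, namely `{p₂,p₃} + p₃·{1,p₂}`, equals `x ↦ x₁x₃`,
which is not an affine function. -/
theorem stmt10 :
    ∃ J : JacobiBracket (Fin 3 → ℝ) (Cinf (Fin 3 → ℝ)),
      J.br = exBr ∧
      IsAffineJacobi J ∧
      ((fun x : Fin 3 → ℝ =>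
          J.br (fun y => y 1) (fun y => y 2) x + x 2 * J.br 1 (fun y => y 1) x)
        = fun x : Fin 3 → ℝ => x 0 * x 2) ∧
      ¬ IsAffineFn (fun x : Fin 3 → ℝ => x 0 * x 2) := by
  
  refine ⟨exJ, rfl, ?_, ?_, ?_⟩
  · -- affine
    rintro a b _ _ ⟨μ, c, ha⟩ ⟨ν, d, hb⟩
    have ea : a = fun y => μ y + c := funext ha
    have eb : b = fun y => ν y + d := funext hb
    have key : exJ.br a b
        = fun x => (c * ν (Pi.single 1 1) - d * μ (Pi.single 1 1)) * x 0 := by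
      rw [show exJ.br = exBr from rfl, ea, eb, exBr_affine]
    refine ⟨(c * ν (Pi.single 1 1) - d * μ (Pi.single 1 1)) •
      (LinearMap.proj 0 : (Fin 3 → ℝ) →ₗ[ℝ] ℝ), 0, fun x => ?_⟩
    rw [key]
    simp [smul_eq_mul]
  · -- the hamiltonian computation
    funext x
    show exBr (fun y => y 1) (fun y => y 2) x + x 2 * exBr 1 (fun y => y 1) x = x 0 * x 2
    simp only [exBr, pd_coord, pd_one, Pi.one_apply]
    simp only [show ((0:Fin 3) = 1) = False from by decide, show ((0:Fin 3) = 2) = False from by decide,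
      show ((1:Fin 3) = 0) = False from by decide, show ((1:Fin 3) = 2) = False from by decide,
      show ((2:Fin 3) = 0) = False from by decide, show ((2:Fin 3) = 1) = False from by decide,
      show ((1:Fin 3) = 1) = True from by decide, show ((2:Fin 3) = 2) = True from by decide,
      show ((0:Fin 3) = 0) = True from by decide, if_true, if_false]
    ring
  · -- x0*x3 is not affine
    rintro ⟨μ, c, hμ⟩
    have h0 := hμ 0
    have h1 := hμ (Pi.single 0 1)
    have h2 := hμ (Pi.single 2 1)
    have h3 := hμ (Pi.single 0 1 + Pi.single 2 1)
    rw [map_add] at h3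
    simp [Pi.single_apply] at h0 h1 h2 h3
    linarith
end

section
/- Let 𝔤 be a real vector space, [·,·]_* an antisymmetric bilinear map on 𝔤*, X₀ : 𝔤* → ℝ a linear functional (an element of 𝔤 when 𝔤 is finite-dimensional), and P₀ an antisymmetric bilinear form on 𝔤*. Define on 𝔤*⊕ℝ the antisymmetric bilinear bracket [(α,s),(β,t)] := ([α,β]_*, −P₀(α,β) − s·X₀(β) + t·X₀(α)). Then this bracket is a Lie algebra bracket on 𝔤*⊕ℝ if and only if: (1) [·,·]_* satisfies the Jacobi identity (so (𝔤*,[·,·]_*) is a Lie algebra); (2) X₀([α,β]_*) = 0 for all α,β ∈ 𝔤* (X₀ is a 1-cocycle); and (3) P₀([α,β]_*,γ) + P₀([β,γ]_*,α) + P₀([γ,α]_*,β) = X₀(α)·P₀(β,γ) + X₀(β)·P₀(γ,α) + X₀(γ)·P₀(α,β) for all α,β,γ ∈ 𝔤* (i.e. d_*P₀ = −X₀∧P₀). Moreover, in this case the line ℝ·(0,1) is an ideal, with [(0,1),(β,t)] = (0, −X₀(β)), so the Lie algebra is almost-special. -/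
/-- given an antisymmetric bilinear map `[·,·]_*` on `𝔤*`, a linear
functional `X₀` on `𝔤*` and an antisymmetric bilinear form `P₀` on `𝔤*`, the bracket
`[(α,s),(β,t)] = ([α,β]_*, −P₀(α,β) − s·X₀(β) + t·X₀(α))` on `𝔤*⊕ℝ` is a Lie algebra
bracket iff `[·,·]_*` satisfies the Jacobi identity, `X₀` is a 1-cocycle, and
`d_*P₀ = −X₀∧P₀`; moreover in this case `[(0,1),(β,t)] = (0,−X₀(β))`, so the line
`ℝ·(0,1)` is an ideal (the Lie algebra is almost-special). -/
theorem stmt12 (g : Type*) [AddCommGroup g] [Module ℝ g]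
    (B : Module.Dual ℝ g → Module.Dual ℝ g → Module.Dual ℝ g)
    (hBadd : ∀ α β γ, B (α + β) γ = B α γ + B β γ)
    (hBsmul : ∀ (r : ℝ) (α β), B (r • α) β = r • B α β)
    (hBanti : ∀ α β, B α β = -B β α)
    (X₀ : Module.Dual ℝ g →ₗ[ℝ] ℝ)
    (P₀ : Module.Dual ℝ g →ₗ[ℝ] Module.Dual ℝ g →ₗ[ℝ] ℝ)
    (hP₀anti : ∀ α β, P₀ α β = -P₀ β α)
    (Br : Module.Dual ℝ g × ℝ → Module.Dual ℝ g × ℝ → Module.Dual ℝ g × ℝ)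
    (hBr : Br = fun p q =>
      (B p.1 q.1, -P₀ p.1 q.1 - p.2 * X₀ q.1 + q.2 * X₀ p.1)) :
    -- the bracket (which is bilinear and antisymmetric by construction) is a Lie
    -- algebra bracket iff (1) Jacobi for [·,·]_*, (2) X₀ is a 1-cocycle,
    -- (3) d_*P₀ = −X₀∧P₀
    ((∀ p q r, Br p (Br q r) + Br q (Br r p) + Br r (Br p q) = 0) ↔
      ((∀ α β γ, B α (B β γ) + B β (B γ α) + B γ (B α β) = 0) ∧
       (∀ α β, X₀ (B α β) = 0) ∧
       (∀ α β γ, P₀ (B α β) γ + P₀ (B β γ) α + P₀ (B γ α) β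
          = X₀ α * P₀ β γ + X₀ β * P₀ γ α + X₀ γ * P₀ α β))) ∧
    -- moreover, in this case ℝ·(0,1) is an ideal, the bracket being
    -- [(0,1),(β,t)] = (0, −X₀(β))
    ((∀ p q r, Br p (Br q r) + Br q (Br r p) + Br r (Br p q) = 0) →
      ∀ (β : Module.Dual ℝ g) (t : ℝ), Br (0, 1) (β, t) = (0, -X₀ β)) := by

  subst hBr
  have hB0 : ∀ β, B 0 β = 0 := by
    intro β
    have := hBsmul 0 0 β
    simpa using this
  have hB0' : ∀ α, B α 0 = 0 := by
    intro α
    rw [hBanti, hB0, neg_zero]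
  constructor
  · constructor
    · intro h
      have h2 : ∀ α β, X₀ (B α β) = 0 := by
        intro α β
        have := congrArg Prod.snd (h (α, 0) (β, 0) (0, 1))
        simp [hB0, hB0'] at this
        linarith
      refine ⟨?_, h2, ?_⟩
      · intro α β γ
        have := congrArg Prod.fst (h (α, 0) (β, 0) (γ, 0))
        simpa using this
      · intro α β γ
        have := congrArg Prod.snd (h (α, 0) (β, 0) (γ, 0))
        simp at this
        have e1 := hP₀anti α (B β γ)
        have e2 := hP₀anti β (B γ α)
        have e3 := hP₀anti γ (B α β)
        linarith
    · rintro ⟨h1, h2, h3⟩ ⟨a, s⟩ ⟨b, t⟩ ⟨c, u⟩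
      refine Prod.ext ?_ ?_
      · simpa using h1 a b c
      · simp [h2]
        have e1 := hP₀anti a (B b c)
        have e2 := hP₀anti b (B c a)
        have e3 := hP₀anti c (B a b)
        have := h3 a b c
        nlinarith [h3 a b c]
  · intro _ β t
    simp [hB0]
end

section
/- Let N be a smooth manifold and {·,·} a Jacobi bracket on C^∞(N,ℝ). For a ∈ C^∞(N,ℝ) define the hamiltonian operator X_a : C^∞(N,ℝ) → C^∞(N,ℝ) by X_a(g) := {a,g} + g·{1,a}. Then: (i) each X_a is an ℝ-linear derivation of the ring C^∞(N,ℝ) (a vector field); and (ii) X_{{a,b}} = X_a∘X_b − X_b∘X_a for all a,b ∈ C^∞(N,ℝ). In particular, a ↦ −X_a is a Lie algebra antihomomorphism from (C^∞(N,ℝ), {·,·}) to the Lie algebra of derivations of C^∞(N,ℝ) with the commutator bracket. -/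
/-!
Expanding `X_a (X_b g)` with the generalized Leibniz rule, the terms symmetric in `a, b`
cancel in the commutator, leaving `{a,{b,g}} - {b,{a,g}} + g ({a,{1,b}} - {b,{1,a}})`.
The Jacobi identity for `(a, b, g)` and for `(a, b, 1)` turns this into
`{{a,b},g} + g {1,{a,b}} = X_{{a,b}} g`.
-/

open scoped Manifold

namespace JacobiBracket

variable {N : Type*} {A : Subalgebra ℝ (N → ℝ)} (J : JacobiBracket N (· ∈ A))
  {a b f g h : N → ℝ}

theorem br_add_right (hf : f ∈ A) (hg : g ∈ A) (hh : h ∈ A) :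
    J.br f (g + h) = J.br f g + J.br f h := by
  rw [J.antisymm f _ hf (A.add_mem hg hh), J.add_left g h f hg hh hf,
    J.antisymm g f hg hf, J.antisymm h f hh hf, neg_add, neg_neg, neg_neg]

theorem br_smul_right (c : ℝ) (hf : f ∈ A) (hg : g ∈ A) :
    J.br f (c • g) = c • J.br f g := by
  rw [J.antisymm f _ hf (A.smul_mem hg c), J.smul_left c g f hg hf,
    J.antisymm g f hg hf, smul_neg, neg_neg]

theorem br_neg_right (hf : f ∈ A) (hg : g ∈ A) : J.br f (-g) = -J.br f g := by
  simpa using J.br_smul_right (-1) hf hg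

theorem br_one_right (ha : a ∈ A) : J.br a 1 = -J.br 1 a :=
  J.antisymm a 1 ha A.one_mem

theorem br_br_sub_br_br (ha : a ∈ A) (hb : b ∈ A) (hg : g ∈ A) :
    J.br a (J.br b g) - J.br b (J.br a g) = J.br (J.br a b) g := by
  have hab := J.smooth_br a b ha hb
  have jac := J.jacobi a b g ha hb hg
  rw [J.antisymm g a hg ha, J.br_neg_right hb (J.smooth_br a g ha hg),
    J.antisymm g _ hg hab] at jac
  linear_combination jac

def hamiltonian (a g : N → ℝ) : N → ℝ :=
  J.br a g + g * J.br 1 a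

theorem hamiltonian_mem (ha : a ∈ A) (hg : g ∈ A) : J.hamiltonian a g ∈ A :=
  A.add_mem (J.smooth_br a g ha hg) (A.mul_mem hg (J.smooth_br 1 a A.one_mem ha))

theorem hamiltonian_add (ha : a ∈ A) (hg : g ∈ A) (hh : h ∈ A) :
    J.hamiltonian a (g + h) = J.hamiltonian a g + J.hamiltonian a h := by
  simp only [hamiltonian, J.br_add_right ha hg hh]
  ring

theorem hamiltonian_smul (c : ℝ) (ha : a ∈ A) (hg : g ∈ A) :
    J.hamiltonian a (c • g) = c • J.hamiltonian a g := by
  simp only [hamiltonian, J.br_smul_right c ha hg, smul_add, smul_mul_assoc]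

theorem hamiltonian_mul (ha : a ∈ A) (hg : g ∈ A) (hh : h ∈ A) :
    J.hamiltonian a (g * h) = J.hamiltonian a g * h + g * J.hamiltonian a h := by
  simp only [hamiltonian, J.leibniz a g h ha hg hh, J.br_one_right ha]
  ring

theorem hamiltonian_hamiltonian (ha : a ∈ A) (hb : b ∈ A) (hg : g ∈ A) :
    J.hamiltonian a (J.hamiltonian b g) =
      J.br a (J.br b g) + g * J.br a (J.br 1 b)
        + (J.br a g * J.br 1 b + J.br b g * J.br 1 a + 2 * g * J.br 1 a * J.br 1 b) := by
  have h1b := J.smooth_br 1 b A.one_mem hb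
  simp only [hamiltonian, J.br_add_right ha (J.smooth_br b g hb hg) (A.mul_mem hg h1b),
    J.leibniz a g _ ha hg h1b, J.br_one_right ha]
  ring

theorem hamiltonian_br (ha : a ∈ A) (hb : b ∈ A) (hg : g ∈ A) :
    J.hamiltonian (J.br a b) g =
      J.hamiltonian a (J.hamiltonian b g) - J.hamiltonian b (J.hamiltonian a g) := by
  have h1 := A.one_mem
  have jac_one := J.br_br_sub_br_br ha hb h1
  rw [J.br_one_right ha, J.br_one_right hb, J.br_one_right (J.smooth_br a b ha hb),
    J.br_neg_right ha (J.smooth_br 1 b h1 hb),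
    J.br_neg_right hb (J.smooth_br 1 a h1 ha)] at jac_one
  rw [J.hamiltonian_hamiltonian ha hb hg, J.hamiltonian_hamiltonian hb ha hg, hamiltonian,
    ← J.br_br_sub_br_br ha hb hg]
  linear_combination g * jac_one

end JacobiBracket

def contMDiffSubalgebra {EN : Type*} [NormedAddCommGroup EN] [NormedSpace ℝ EN]
    {HN : Type*} [TopologicalSpace HN] (IN : ModelWithCorners ℝ EN HN)
    (N : Type*) [TopologicalSpace N] [ChartedSpace HN N] : Subalgebra ℝ (N → ℝ) where
  carrier := {f | ContMDiff IN 𝓘(ℝ, ℝ) (⊤ : ℕ∞) f}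
  mul_mem' hf hg := hf.mul hg
  add_mem' hf hg := hf.add hg
  algebraMap_mem' _ := contMDiff_const

theorem stmt15_general
    {EN : Type*} [NormedAddCommGroup EN] [NormedSpace ℝ EN]
    {HN : Type*} [TopologicalSpace HN] (IN : ModelWithCorners ℝ EN HN)
    (N : Type*) [TopologicalSpace N] [ChartedSpace HN N]
    (S : (N → ℝ) → Prop) (hS : S = fun f => ContMDiff IN 𝓘(ℝ, ℝ) (⊤ : ℕ∞) f)
    (J : JacobiBracket N S)
    (X : (N → ℝ) → (N → ℝ) → N → ℝ)
    (hX : X = fun a g x => J.br a g x + g x * J.br 1 a x) :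
    -- (i) each X_a is an ℝ-linear derivation of C^∞(N,ℝ)
    (∀ a, S a →
      (∀ g, S g → S (X a g)) ∧
      (∀ g h, S g → S h → X a (g + h) = X a g + X a h) ∧
      (∀ (r : ℝ) (g : N → ℝ), S g → X a (r • g) = r • X a g) ∧
      (∀ g h, S g → S h → X a (g * h) = X a g * h + g * X a h)) ∧
    -- (ii) X_{{a,b}} = X_a ∘ X_b − X_b ∘ X_a
    (∀ a b g, S a → S b → S g →
      X (J.br a b) g = X a (X b g) - X b (X a g)) := by
  subst hS hX
  -- membership in `A` unfolds to `ContMDiff`, so `J` is definitionally a bracket on `A`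
  let A := contMDiffSubalgebra IN N
  exact ⟨fun a ha => ⟨fun g hg => JacobiBracket.hamiltonian_mem (A := A) J ha hg,
      fun g h hg hh => JacobiBracket.hamiltonian_add (A := A) J ha hg hh,
      fun r g hg => JacobiBracket.hamiltonian_smul (A := A) J r ha hg,
      fun g h hg hh => JacobiBracket.hamiltonian_mul (A := A) J ha hg hh⟩,
    fun a b g ha hb hg => JacobiBracket.hamiltonian_br (A := A) J ha hb hg⟩

/-- for a Jacobi bracket on `C^∞(N,ℝ)`, the hamiltonian operator
`X_a(g) = {a,g} + g·{1,a}` of each `a` is an ℝ-linear derivation of `C^∞(N,ℝ)`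
(a vector field), and `X_{{a,b}} = X_a∘X_b − X_b∘X_a`; in particular `a ↦ −X_a` is a
Lie algebra antihomomorphism into the derivations with the commutator bracket. -/
theorem stmt15
    {EN : Type*} [NormedAddCommGroup EN] [NormedSpace ℝ EN] [FiniteDimensional ℝ EN]
    {HN : Type*} [TopologicalSpace HN] (IN : ModelWithCorners ℝ EN HN)
    (N : Type*) [TopologicalSpace N] [ChartedSpace HN N] [IsManifold IN (⊤ : ℕ∞) N]
    (S : (N → ℝ) → Prop) (hS : S = fun f => ContMDiff IN 𝓘(ℝ, ℝ) (⊤ : ℕ∞) f)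
    (J : JacobiBracket N S)
    (X : (N → ℝ) → (N → ℝ) → N → ℝ)
    (hX : X = fun a g x => J.br a g x + g x * J.br 1 a x) :
    -- (i) each X_a is an ℝ-linear derivation of C^∞(N,ℝ)
    (∀ a, S a →
      (∀ g, S g → S (X a g)) ∧
      (∀ g h, S g → S h → X a (g + h) = X a g + X a h) ∧
      (∀ (r : ℝ) (g : N → ℝ), S g → X a (r • g) = r • X a g) ∧
      (∀ g h, S g → S h → X a (g * h) = X a g * h + g * X a h)) ∧
    -- (ii) X_{{a,b}} = X_a ∘ X_b − X_b ∘ X_a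
    (∀ a b g, S a → S b → S g →
      X (J.br a b) g = X a (X b g) - X b (X a g)) :=
  stmt15_general IN N S hS J X hX
end
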